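/- arXiv:math/0402040 — 3 statements merged into one kernel-verified Lean document; each statement's English description precedes it below -/
import Mathlib

section
/- If σ : ℝ → M is an almost-periodic function into a Banach space M (i.e., the set of translates {σ(·+h) | h ∈ ℝ} is precompact in the space of bounded continuous functions C_b(ℝ, M)), then the mean value lim_{T→∞} (1/(2T)) ∫_{-T}^{T} σ(t) dt exists in M. -/
/-!
Bochner's criterion yields, for every `ε > 0`, a length `ℓ` such that every interval of length
`ℓ` contains an `ε`-almost period `τ` of `σ`, i.e. `‖σ (t + τ) - σ t‖ ≤ ε` for all `t`. Sliding a
window `[a, a + T]` to `[τ, τ + T]` shows that every integral of `σ` over a window of length `T`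
is within `ε T + 2 ‖σ‖ ℓ` of `∫₀ᵀ σ`. Averaging over a second window, the double integral
`∫₀ᴾ ∫₀^Q σ (s + u)` is close both to `P ∫₀^Q σ` and to `Q ∫₀ᴾ σ`, so the one-sided averages
`T⁻¹ ∫₀ᵀ σ` form a Cauchy family up to `O(ε)`; the symmetric averages over `[-T, T]` differ from
the one-sided averages over `[0, 2T]` by `O(ε + 1 / T)`. Completeness of `M` gives the limit.
-/

open Filter Topology BoundedContinuousFunction

/-- The apTranslate `σ(· + h)` of a bounded continuous function. -/
noncomputable def apTranslate {M : Type*} [NormedAddCommGroup M]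
    (σ : ℝ →ᵇ M) (h : ℝ) : ℝ →ᵇ M :=
  σ.compContinuous ⟨fun t => t + h, by continuity⟩

/-- Bochner's criterion: `σ` is almost-periodic iff the set of its apTranslates is
precompact in `C_b(ℝ, M)`. -/
def AlmostPeriodic {M : Type*} [NormedAddCommGroup M] (σ : ℝ →ᵇ M) : Prop :=
  IsCompact (closure (Set.range (apTranslate σ)))

open MeasureTheory Set intervalIntegral

theorem TotallyBounded.exists_finset_forall_dist_lt {ι α : Type*} [PseudoMetricSpace α]
    {f : ι → α} (hf : TotallyBounded (range f)) {ε : ℝ} (hε : 0 < ε) :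
    ∃ H : Finset ι, ∀ i, ∃ j ∈ H, dist (f i) (f j) < ε := by
  classical
  obtain ⟨t, hts, htfin, hcover⟩ := Metric.finite_approx_of_totallyBounded hf ε hε
  lift t to Finset α using htfin
  rw [← image_univ] at hts
  obtain ⟨H, -, rfl⟩ := Finset.subset_set_image_iff.mp hts
  refine ⟨H, fun i => ?_⟩
  obtain ⟨_, hy, hiy⟩ := mem_iUnion₂.mp (hcover (mem_range_self i))
  obtain ⟨j, hj, rfl⟩ := Finset.mem_image.mp (Finset.mem_coe.mp hy)
  exact ⟨j, hj, hiy⟩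

section

variable {M : Type*} [NormedAddCommGroup M]

theorem norm_sub_le_dist_apTranslate (σ : ℝ →ᵇ M) (h h' t : ℝ) :
    ‖σ (t + (h - h')) - σ t‖ ≤ dist (apTranslate σ h) (apTranslate σ h') := by
  simpa [apTranslate, dist_eq_norm, sub_add_eq_add_sub, add_sub_assoc] using
    (apTranslate σ h).dist_coe_le_dist (g := apTranslate σ h') (t - h')

def HasAlmostPeriodInEveryInterval (f : ℝ → M) (ε ℓ : ℝ) : Prop :=
  ∀ a, ∃ τ ∈ Icc a (a + ℓ), ∀ t, ‖f (t + τ) - f t‖ ≤ ε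

theorem AlmostPeriodic.hasAlmostPeriodInEveryInterval {σ : ℝ →ᵇ M} (hσ : AlmostPeriodic σ)
    {ε : ℝ} (hε : 0 < ε) : ∃ ℓ, HasAlmostPeriodInEveryInterval σ ε ℓ := by
  obtain ⟨H, hH⟩ := (hσ.totallyBounded.subset subset_closure).exists_finset_forall_dist_lt hε
  obtain ⟨b, hb⟩ := isBounded_iff_forall_norm_le.mp H.finite_toSet.isBounded
  refine ⟨2 * b, fun a => ?_⟩
  -- the net point `h' ∈ [-b, b]` nearest to `a + b` gives the almost period `a + b - h'`
  obtain ⟨h', hh', hdist⟩ := hH (a + b)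
  have hh'b := abs_le.mp (hb h' hh')
  exact ⟨a + b - h', ⟨by linarith, by linarith⟩,
    fun t => (norm_sub_le_dist_apTranslate σ _ _ t).trans hdist.le⟩

variable [NormedSpace ℝ M]

theorem norm_integral_sub_integral_le_of_almostPeriod {f : ℝ → M} (hf : Continuous f) {τ ε T : ℝ}
    (hτ : ∀ t, ‖f (t + τ) - f t‖ ≤ ε) (hT : 0 ≤ T) :
    ‖(∫ t in τ..τ + T, f t) - ∫ t in 0..T, f t‖ ≤ ε * T := by
  have hshift : ∫ t in τ..τ + T, f t = ∫ t in 0..T, f (t + τ) := by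
    simp [add_comm]
  have hint : IntervalIntegrable (fun t => f (t + τ)) volume 0 T :=
    (hf.comp (continuous_add_const τ)).intervalIntegrable 0 T
  rw [hshift, ← integral_sub hint (hf.intervalIntegrable 0 T)]
  refine (norm_integral_le_of_norm_le_const fun t _ => hτ t).trans_eq ?_
  rw [sub_zero, abs_of_nonneg hT]

theorem norm_integral_sub_integral_translate_le (f : ℝ →ᵇ M) (a b T : ℝ) :
    ‖(∫ t in a..a + T, f t) - ∫ t in b..b + T, f t‖ ≤ 2 * ‖f‖ * |b - a| := by
  have hf : ∀ u v, IntervalIntegrable f volume u v := fun u v =>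
    f.continuous.intervalIntegrable u v
  have hbound : ∀ u v, ‖∫ t in u..v, f t‖ ≤ ‖f‖ * |v - u| := fun u v =>
    norm_integral_le_of_norm_le_const fun t _ => f.norm_coe_le_norm t
  rw [integral_interval_sub_interval_comm (hf _ _) (hf _ _) (hf _ _)]
  calc ‖(∫ t in a..b, f t) - ∫ t in a + T..b + T, f t‖
      ≤ ‖∫ t in a..b, f t‖ + ‖∫ t in a + T..b + T, f t‖ := norm_sub_le _ _
    _ ≤ ‖f‖ * |b - a| + ‖f‖ * |b + T - (a + T)| := add_le_add (hbound _ _) (hbound _ _)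
    _ = 2 * ‖f‖ * |b - a| := by rw [add_sub_add_right_eq_sub]; ring

theorem HasAlmostPeriodInEveryInterval.norm_integral_sub_integral_le {σ : ℝ →ᵇ M} {ε ℓ : ℝ}
    (hσ : HasAlmostPeriodInEveryInterval σ ε ℓ) (a : ℝ) {T : ℝ} (hT : 0 ≤ T) :
    ‖(∫ t in a..a + T, σ t) - ∫ t in 0..T, σ t‖ ≤ ε * T + 2 * ‖σ‖ * ℓ := by
  obtain ⟨τ, ⟨haτ, hτa⟩, hτ⟩ := hσ a
  have hmove : 2 * ‖σ‖ * |τ - a| ≤ 2 * ‖σ‖ * ℓ := by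
    rw [abs_of_nonneg (sub_nonneg.mpr haτ)]
    gcongr
    linarith
  calc ‖(∫ t in a..a + T, σ t) - ∫ t in 0..T, σ t‖
      ≤ ‖(∫ t in a..a + T, σ t) - ∫ t in τ..τ + T, σ t‖
        + ‖(∫ t in τ..τ + T, σ t) - ∫ t in 0..T, σ t‖ := norm_sub_le_norm_sub_add_norm_sub _ _ _
    _ ≤ 2 * ‖σ‖ * ℓ + ε * T := add_le_add
        ((norm_integral_sub_integral_translate_le σ a τ T).trans hmove)
        (norm_integral_sub_integral_le_of_almostPeriod σ.continuous hτ hT)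
    _ = ε * T + 2 * ‖σ‖ * ℓ := add_comm _ _

theorem integral_integral_add_comm {f : ℝ → M} (hf : Continuous f) (P Q : ℝ) :
    ∫ s in 0..P, ∫ u in 0..Q, f (s + u) = ∫ s in 0..Q, ∫ u in 0..P, f (s + u) := by
  rw [intervalIntegral_intervalIntegral_swap]
  · simp_rw [add_comm]
  · have hcont : Continuous fun p : ℝ × ℝ => f (p.1 + p.2) := by fun_prop
    exact (hcont.continuousOn.integrableOn_compact (isCompact_uIcc.prod isCompact_uIcc)).mono_set
      (prod_mono uIoc_subset_uIcc uIoc_subset_uIcc)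

theorem norm_integral_integral_add_sub_smul_le [CompleteSpace M] {f : ℝ → M}
    (hf : Continuous f) {P Q c : ℝ} (hP : 0 ≤ P)
    (hc : ∀ a, ‖(∫ t in a..a + Q, f t) - ∫ t in 0..Q, f t‖ ≤ c) :
    ‖(∫ s in 0..P, ∫ u in 0..Q, f (s + u)) - P • ∫ t in 0..Q, f t‖ ≤ P * c := by
  have hinner : Continuous fun s => ∫ u in 0..Q, f (s + u) :=
    continuous_parametric_intervalIntegral_of_continuous' (by fun_prop) 0 Q
  have hshift : ∀ s, ∫ u in 0..Q, f (s + u) = ∫ t in s..s + Q, f t := fun s => by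
    simp [integral_comp_add_left]
  have hsub : (∫ s in 0..P, ∫ u in 0..Q, f (s + u)) - P • ∫ t in 0..Q, f t
      = ∫ s in 0..P, ((∫ u in 0..Q, f (s + u)) - ∫ t in 0..Q, f t) := by
    rw [integral_sub (hinner.intervalIntegrable 0 P) intervalIntegrable_const,
      intervalIntegral.integral_const, sub_zero]
  rw [hsub]
  refine (intervalIntegral.norm_integral_le_of_norm_le_const (C := c) fun s _ => ?_).trans_eq ?_
  · rw [hshift]
    exact hc s
  · rw [sub_zero, abs_of_nonneg hP, mul_comm]

theorem norm_smul_integral_sub_smul_integral_le [CompleteSpace M] {f : ℝ → M} (hf : Continuous f)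
    {P Q cP cQ : ℝ} (hP : 0 ≤ P) (hQ : 0 ≤ Q)
    (hcP : ∀ a, ‖(∫ t in a..a + P, f t) - ∫ t in 0..P, f t‖ ≤ cP)
    (hcQ : ∀ a, ‖(∫ t in a..a + Q, f t) - ∫ t in 0..Q, f t‖ ≤ cQ) :
    ‖P • (∫ t in 0..Q, f t) - Q • ∫ t in 0..P, f t‖ ≤ P * cQ + Q * cP := by
  have hPQ := norm_integral_integral_add_sub_smul_le hf hP hcQ
  have hQP := norm_integral_integral_add_sub_smul_le hf hQ hcP
  rw [← integral_integral_add_comm hf] at hQP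
  refine (norm_sub_le_norm_sub_add_norm_sub _ (∫ s in 0..P, ∫ u in 0..Q, f (s + u)) _).trans ?_
  rw [norm_sub_rev]
  exact add_le_add hPQ hQP

namespace HasAlmostPeriodInEveryInterval

variable {σ : ℝ →ᵇ M} {ε ℓ : ℝ}

theorem norm_average_sub_average_le [CompleteSpace M]
    (hσ : HasAlmostPeriodInEveryInterval σ ε ℓ) {P Q : ℝ} (hP : 0 < P) (hQ : 0 < Q) :
    ‖Q⁻¹ • (∫ t in 0..Q, σ t) - P⁻¹ • ∫ t in 0..P, σ t‖
      ≤ 2 * ε + 2 * ‖σ‖ * ℓ / P + 2 * ‖σ‖ * ℓ / Q := by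
  set X := ∫ t in 0..Q, σ t
  set Y := ∫ t in 0..P, σ t
  have hPQ : ‖P • X - Q • Y‖ ≤ P * (ε * Q + 2 * ‖σ‖ * ℓ) + Q * (ε * P + 2 * ‖σ‖ * ℓ) :=
    norm_smul_integral_sub_smul_integral_le σ.continuous hP.le hQ.le
      (fun a => hσ.norm_integral_sub_integral_le a hP.le)
      (fun a => hσ.norm_integral_sub_integral_le a hQ.le)
  have hrescale : Q⁻¹ • X - P⁻¹ • Y = (P * Q)⁻¹ • (P • X - Q • Y) := by
    rw [smul_sub, smul_smul, smul_smul]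
    congr 2 <;> field_simp
  rw [hrescale, norm_smul, Real.norm_of_nonneg (by positivity)]
  calc (P * Q)⁻¹ * ‖P • X - Q • Y‖
      ≤ (P * Q)⁻¹ * (P * (ε * Q + 2 * ‖σ‖ * ℓ) + Q * (ε * P + 2 * ‖σ‖ * ℓ)) := by gcongr
    _ = 2 * ε + 2 * ‖σ‖ * ℓ / P + 2 * ‖σ‖ * ℓ / Q := by field_simp; ring

theorem norm_symmetricAverage_sub_average_le (hσ : HasAlmostPeriodInEveryInterval σ ε ℓ)
    {T : ℝ} (hT : 0 < T) :
    ‖(1 / (2 * T)) • (∫ t in (-T)..T, σ t) - (2 * T)⁻¹ • ∫ t in 0..2 * T, σ t‖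
      ≤ ε + ‖σ‖ * ℓ / T := by
  have h := hσ.norm_integral_sub_integral_le (-T) (by positivity : 0 ≤ 2 * T)
  rw [show -T + 2 * T = T by ring] at h
  rw [one_div, ← smul_sub, norm_smul, Real.norm_of_nonneg (by positivity)]
  calc (2 * T)⁻¹ * ‖(∫ t in (-T)..T, σ t) - ∫ t in 0..2 * T, σ t‖
      ≤ (2 * T)⁻¹ * (ε * (2 * T) + 2 * ‖σ‖ * ℓ) := by gcongr
    _ = ε + ‖σ‖ * ℓ / T := by field_simp

theorem dist_symmetricAverage_le [CompleteSpace M]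
    (hσ : HasAlmostPeriodInEveryInterval σ ε ℓ) {P Q : ℝ} (hP : 0 < P) (hQ : 0 < Q) :
    dist ((1 / (2 * P)) • ∫ t in (-P)..P, σ t) ((1 / (2 * Q)) • ∫ t in (-Q)..Q, σ t)
      ≤ 4 * ε + 2 * ‖σ‖ * ℓ / P + 2 * ‖σ‖ * ℓ / Q := by
  have hSP := hσ.norm_symmetricAverage_sub_average_le hP
  have hSQ := hσ.norm_symmetricAverage_sub_average_le hQ
  have hA := hσ.norm_average_sub_average_le (by positivity : 0 < 2 * Q)
    (by positivity : 0 < 2 * P)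
  have hhalve : ∀ T, 2 * ‖σ‖ * ℓ / (2 * T) = ‖σ‖ * ℓ / T := fun T => by
    rw [mul_assoc, mul_div_mul_left _ _ two_ne_zero]
  rw [hhalve, hhalve] at hA
  calc _ ≤ _ := dist_triangle4 _ ((2 * P)⁻¹ • ∫ t in 0..2 * P, σ t)
        ((2 * Q)⁻¹ • ∫ t in 0..2 * Q, σ t) _
    _ ≤ (ε + ‖σ‖ * ℓ / P) + (2 * ε + ‖σ‖ * ℓ / Q + ‖σ‖ * ℓ / P) + (ε + ‖σ‖ * ℓ / Q) := by
        rw [dist_eq_norm, dist_eq_norm, dist_eq_norm']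
        exact add_le_add (add_le_add hSP hA) hSQ
    _ = 4 * ε + 2 * ‖σ‖ * ℓ / P + 2 * ‖σ‖ * ℓ / Q := by ring

end HasAlmostPeriodInEveryInterval

end

theorem cauchySeq_of_forall_dist_le_add_div {X : Type*} [PseudoMetricSpace X] {f : ℝ → X}
    (h : ∀ ε > 0, ∃ C, ∀ P Q, 0 < P → 0 < Q → dist (f P) (f Q) ≤ ε + C / P + C / Q) :
    CauchySeq f := by
  refine Metric.cauchySeq_iff'.mpr fun ε hε => ?_
  obtain ⟨C, hC⟩ := h (ε / 2) (half_pos hε)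
  have hdecay : Tendsto (fun P : ℝ => C / P) atTop (𝓝 0) :=
    tendsto_const_nhds.div_atTop tendsto_id
  obtain ⟨N, hN⟩ := eventually_atTop.mp <|
    hdecay.eventually (gt_mem_nhds (by positivity : 0 < ε / 4))
  have hN₁ : 0 < max N 1 := lt_max_of_lt_right one_pos
  refine ⟨max N 1, fun P hP => ?_⟩
  linarith [hC P (max N 1) (hN₁.trans_le hP) hN₁, hN P ((le_max_left _ _).trans hP),
    hN _ (le_max_left N 1)]

/-- If `σ : ℝ → M` is almost periodic with values in a Banach space `M`, then
its mean value `lim_{T→∞} (1/(2T)) ∫_{-T}^{T} σ(t) dt` exists in `M`. -/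
theorem mean_value_exists {M : Type*} [NormedAddCommGroup M] [NormedSpace ℝ M]
    [CompleteSpace M] (σ : ℝ →ᵇ M) (hσ : AlmostPeriodic σ) :
    ∃ m : M, Tendsto (fun T : ℝ => (1 / (2 * T)) • ∫ t in (-T)..T, σ t) atTop (𝓝 m) := by
  refine cauchySeq_tendsto_of_complete (cauchySeq_of_forall_dist_le_add_div fun ε hε => ?_)
  obtain ⟨ℓ, hℓ⟩ := hσ.hasAlmostPeriodInEveryInterval (by positivity : 0 < ε / 4)
  refine ⟨2 * ‖σ‖ * ℓ, fun P Q hP hQ => ?_⟩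
  linarith [hℓ.dist_symmetricAverage_le hP hQ]
end

section
/- Let σ : ℝ → M be almost-periodic with mean value σ̄. Then there exists a bounded decreasing function μ : ℝ₊ → ℝ₊ with μ(T) → 0 as T → ∞ such that for every ζ in the hull H(σ) and every s ∈ ℝ and T > 0, ‖(1/T) ∫_s^{s+T} (ζ(t) − σ̄) dt‖ ≤ μ(T). -/
/-!
Bochner's criterion makes the translates of `σ` totally bounded, so for every `ε` each translate
`σ(· + s)` is `ε`-close to some `σ(· + h)` with `|h| ≤ L(ε)`. Hence the integral of `σ - σ̄` over a
window `[s, s + T]` differs from the one over `[0, T]` by at most `εT + O(L)`. Comparing `[-T, 0]`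
with `[0, T]` and using the mean over `[-T, T]` shows that all window averages are `O(ε)` once `T`
is large, uniformly in `s`. Taking `μ(T)` to be the supremum of the window averages over all
positions and all lengths `≥ T` gives the estimate on the translates, and it passes to the hull
because a window average is continuous on `C_b(ℝ, M)`.
-/

open Filter Topology BoundedContinuousFunction

/-- The hull of `σ`: the closure in `C_b(ℝ, M)` of the set of translates of `σ`. -/
noncomputable def hull {M : Type*} [NormedAddCommGroup M] (σ : ℝ →ᵇ M) : Set (ℝ →ᵇ M) :=
  closure (Set.range (apTranslate σ))

open MeasureTheory

theorem exists_antitone_majorant_of_eventually_le {ι : Type*} [Nonempty ι] (g : ι → ℝ → ℝ)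
    {C : ℝ} (hg0 : ∀ i T, 0 ≤ g i T) (hgC : ∀ i T, g i T ≤ C)
    (hlim : ∀ ε > 0, ∀ᶠ T in atTop, ∀ i, g i T ≤ ε) :
    ∃ μ : ℝ → ℝ, (∀ T, 0 ≤ μ T) ∧ (∀ T, μ T ≤ C) ∧ Antitone μ ∧
      Tendsto μ atTop (𝓝 0) ∧ ∀ i T, g i T ≤ μ T := by
  let S : ℝ → Set ℝ := fun T => {x | ∃ i, ∃ T' ≥ T, g i T' = x}
  have hle : ∀ T, ∀ i, ∀ T' ≥ T, g i T' ≤ sSup (S T) := fun T i T' hT' =>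
    le_csSup ⟨C, by rintro _ ⟨i, T', -, rfl⟩; exact hgC i T'⟩ ⟨i, T', hT', rfl⟩
  have hsup_le : ∀ T ε, (∀ i, ∀ T' ≥ T, g i T' ≤ ε) → sSup (S T) ≤ ε := fun T ε h =>
    csSup_le ⟨_, Classical.arbitrary ι, T, le_rfl, rfl⟩
      (by rintro _ ⟨i, T', hT', rfl⟩; exact h i T' hT')
  have hμ0 : ∀ T, 0 ≤ sSup (S T) := fun T =>
    (hg0 (Classical.arbitrary ι) T).trans (hle T _ T le_rfl)
  refine ⟨fun T => sSup (S T), hμ0, fun T => hsup_le T C fun i T' _ => hgC i T',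
    fun T₁ T₂ hT => hsup_le T₂ _ fun i T' hT' => hle T₁ i T' (hT.trans hT'), ?_,
    fun i T => hle T i T le_rfl⟩
  rw [Metric.tendsto_atTop]
  intro ε hε
  obtain ⟨T₀, hT₀⟩ := eventually_atTop.1 (hlim (ε / 2) (half_pos hε))
  refine ⟨T₀, fun T hT => ?_⟩
  have := hsup_le T (ε / 2) fun i T' hT' => hT₀ T' (hT.trans hT') i
  rw [Real.dist_0_eq_abs, abs_of_nonneg (hμ0 T)]
  linarith

section Integrals

variable {E : Type*} [NormedAddCommGroup E] [NormedSpace ℝ E] {f : ℝ → E}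

theorem norm_intervalIntegral_shift_sub_le (hf : Continuous f) {C : ℝ} (hC : ∀ t, ‖f t‖ ≤ C)
    (h T : ℝ) : ‖(∫ t in h..h + T, f t) - ∫ t in 0..T, f t‖ ≤ 2 * C * |h| := by
  have hint : ∀ a b, IntervalIntegrable f volume a b := hf.intervalIntegrable
  have hbound : ∀ a b, ‖∫ t in a..b, f t‖ ≤ C * |b - a| := fun a b =>
    intervalIntegral.norm_integral_le_of_norm_le_const fun t _ => hC t
  rw [intervalIntegral.integral_interval_sub_interval_comm (hint _ _) (hint _ _) (hint _ _)]
  calc ‖(∫ t in h..0, f t) - ∫ t in h + T..T, f t‖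
      ≤ ‖∫ t in h..0, f t‖ + ‖∫ t in h + T..T, f t‖ := norm_sub_le _ _
    _ ≤ C * |0 - h| + C * |T - (h + T)| := add_le_add (hbound _ _) (hbound _ _)
    _ = 2 * C * |h| := by
      rw [zero_sub, show T - (h + T) = -h by ring, abs_neg]
      ring

theorem norm_intervalIntegral_le_of_norm_shift_sub_le (hf : Continuous f) {s T D : ℝ}
    (hs : ‖(∫ t in s..s + T, f t) - ∫ t in 0..T, f t‖ ≤ D)
    (hneg : ‖(∫ t in -T..0, f t) - ∫ t in 0..T, f t‖ ≤ D) :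
    ‖∫ t in s..s + T, f t‖ ≤ 3 / 2 * D + ‖∫ t in -T..T, f t‖ / 2 := by
  have hsplit : (∫ t in -T..0, f t) + ∫ t in 0..T, f t = ∫ t in -T..T, f t :=
    intervalIntegral.integral_add_adjacent_intervals (hf.intervalIntegrable _ _)
      (hf.intervalIntegrable _ _)
  have hhalf : (2 : ℝ) • ∫ t in 0..T, f t
      = (∫ t in -T..T, f t) - ((∫ t in -T..0, f t) - ∫ t in 0..T, f t) := by
    rw [← hsplit, two_smul]
    abel
  have h0 : 2 * ‖∫ t in 0..T, f t‖ ≤ ‖∫ t in -T..T, f t‖ + D := by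
    have := congrArg norm hhalf
    rw [norm_smul, Real.norm_two] at this
    exact this ▸ (norm_sub_le _ _).trans (add_le_add le_rfl hneg)
  calc ‖∫ t in s..s + T, f t‖
      ≤ ‖(∫ t in s..s + T, f t) - ∫ t in 0..T, f t‖ + ‖∫ t in 0..T, f t‖ :=
        norm_le_norm_sub_add _ _
    _ ≤ 3 / 2 * D + ‖∫ t in -T..T, f t‖ / 2 := by linarith

theorem tendsto_symmetric_average_sub_of_tendsto [CompleteSpace E] (hf : Continuous f) {c : E}
    (hmean : Tendsto (fun T : ℝ => (1 / (2 * T)) • ∫ t in (-T)..T, f t) atTop (𝓝 c)) :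
    Tendsto (fun T : ℝ => (1 / (2 * T)) • ∫ t in (-T)..T, (f t - c)) atTop (𝓝 0) := by
  refine (sub_self c ▸ hmean.sub_const c).congr' ?_
  filter_upwards [eventually_gt_atTop 0] with T hT
  rw [intervalIntegral.integral_sub (hf.intervalIntegrable _ _) intervalIntegrable_const,
    intervalIntegral.integral_const, smul_sub, smul_smul, sub_neg_eq_add, ← two_mul,
    one_div_mul_cancel (by positivity), one_smul]

end Integrals

section AlmostPeriodic

variable {M : Type*} [NormedAddCommGroup M] {σ : ℝ →ᵇ M}

theorem AlmostPeriodic.exists_bounded_dist_translate_lt (hσ : AlmostPeriodic σ) {ε : ℝ}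
    (hε : 0 < ε) : ∃ L, ∀ s, ∃ h, |h| ≤ L ∧ dist (apTranslate σ s) (apTranslate σ h) < ε := by
  obtain ⟨t, hts, htfin, hcover⟩ :=
    Metric.finite_approx_of_totallyBounded (hσ.totallyBounded.subset subset_closure) ε hε
  rw [← Set.image_univ] at hts
  obtain ⟨H, -, hHfin, hcover⟩ := Set.exists_subset_image_finite_and
    (p := fun t => Set.range (apTranslate σ) ⊆ ⋃ y ∈ t, Metric.ball y ε)
    |>.1 ⟨t, hts, htfin, hcover⟩
  obtain ⟨L, hL⟩ := hHfin.isBounded.exists_norm_le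
  refine ⟨L, fun s => ?_⟩
  have hs := hcover (Set.mem_range_self s)
  simp only [Set.biUnion_image, Set.mem_iUnion₂, Metric.mem_ball] at hs
  obtain ⟨h, hH, hdist⟩ := hs
  exact ⟨h, hL h hH, hdist⟩

theorem BoundedContinuousFunction.norm_apply_sub_le {α : Type*} [TopologicalSpace α]
    (f : α →ᵇ M) (c : M) (x : α) : ‖f x - c‖ ≤ ‖f‖ + ‖c‖ :=
  (norm_sub_le _ _).trans (add_le_add (f.norm_coe_le_norm x) le_rfl)

variable [NormedSpace ℝ M]

theorem intervalIntegral_apTranslate_sub (σ : ℝ →ᵇ M) (c : M) (h a b : ℝ) :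
    ∫ t in a..b, (apTranslate σ h t - c) = ∫ t in a + h..b + h, (σ t - c) :=
  intervalIntegral.integral_comp_add_right (fun t => σ t - c) h

theorem norm_intervalIntegral_sub_le_dist (ζ ξ : ℝ →ᵇ M) (c : M) (a b : ℝ) :
    ‖(∫ t in a..b, (ζ t - c)) - ∫ t in a..b, (ξ t - c)‖ ≤ dist ζ ξ * |b - a| := by
  rw [← intervalIntegral.integral_sub
    ((by fun_prop : Continuous fun t => ζ t - c).intervalIntegrable _ _)
    ((by fun_prop : Continuous fun t => ξ t - c).intervalIntegrable _ _)]
  refine intervalIntegral.norm_integral_le_of_norm_le_const fun t _ => ?_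
  rw [sub_sub_sub_cancel_right, ← dist_eq_norm]
  exact dist_coe_le_dist t

theorem norm_average_sub_le (σ : ℝ →ᵇ M) (c : M) (s T : ℝ) :
    ‖(1 / T) • ∫ t in s..s + T, (σ t - c)‖ ≤ ‖σ‖ + ‖c‖ := by
  have hbound : ‖∫ t in s..s + T, (σ t - c)‖ ≤ (‖σ‖ + ‖c‖) * |s + T - s| :=
    intervalIntegral.norm_integral_le_of_norm_le_const fun t _ => σ.norm_apply_sub_le c t
  rw [add_sub_cancel_left] at hbound
  rcases eq_or_ne T 0 with rfl | hT
  · simp only [div_zero, zero_smul, norm_zero]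
    positivity
  · rw [norm_smul, Real.norm_eq_abs, abs_div, abs_one]
    calc 1 / |T| * ‖∫ t in s..s + T, (σ t - c)‖ ≤ 1 / |T| * ((‖σ‖ + ‖c‖) * |T|) := by gcongr
      _ = ‖σ‖ + ‖c‖ := by field_simp

theorem AlmostPeriodic.exists_norm_intervalIntegral_shift_sub_le (hσ : AlmostPeriodic σ)
    (c : M) {ε : ℝ} (hε : 0 < ε) : ∃ L, ∀ s T, 0 ≤ T →
      ‖(∫ t in s..s + T, (σ t - c)) - ∫ t in 0..T, (σ t - c)‖ ≤ ε * T + L := by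
  obtain ⟨R, hR⟩ := hσ.exists_bounded_dist_translate_lt hε
  refine ⟨2 * (‖σ‖ + ‖c‖) * R, fun s T hT => ?_⟩
  obtain ⟨h, hhR, hdist⟩ := hR s
  have hnear : ‖(∫ t in s..s + T, (σ t - c)) - ∫ t in h..h + T, (σ t - c)‖ ≤ ε * T := by
    have := norm_intervalIntegral_sub_le_dist (apTranslate σ s) (apTranslate σ h) c 0 T
    rw [intervalIntegral_apTranslate_sub, intervalIntegral_apTranslate_sub, zero_add, zero_add,
      sub_zero, abs_of_nonneg hT, add_comm T s, add_comm T h] at this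
    exact this.trans (mul_le_mul_of_nonneg_right hdist.le hT)
  have hfar : ‖(∫ t in h..h + T, (σ t - c)) - ∫ t in 0..T, (σ t - c)‖ ≤ 2 * (‖σ‖ + ‖c‖) * R :=
    (norm_intervalIntegral_shift_sub_le (by fun_prop) (σ.norm_apply_sub_le c) h T).trans
      (by gcongr)
  exact (norm_sub_le_norm_sub_add_norm_sub _ _ _).trans (add_le_add hnear hfar)

theorem AlmostPeriodic.eventually_norm_average_sub_le [CompleteSpace M] (hσ : AlmostPeriodic σ)
    {σbar : M}
    (hmean : Tendsto (fun T : ℝ => (1 / (2 * T)) • ∫ t in (-T)..T, σ t) atTop (𝓝 σbar))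
    {ε : ℝ} (hε : 0 < ε) :
    ∀ᶠ T in atTop, ∀ s, ‖(1 / T) • ∫ t in s..s + T, (σ t - σbar)‖ ≤ ε := by
  obtain ⟨L, hL⟩ := hσ.exists_norm_intervalIntegral_shift_sub_le σbar (ε := ε / 4) (by positivity)
  have hsym := (tendsto_symmetric_average_sub_of_tendsto σ.continuous hmean).norm
  rw [norm_zero] at hsym
  have hLdiv : Tendsto (fun T : ℝ => L / T) atTop (𝓝 0) := tendsto_const_nhds.div_atTop tendsto_id
  filter_upwards [eventually_gt_atTop 0, (tendsto_order.1 hsym).2 (ε / 4) (by positivity),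
    (tendsto_order.1 hLdiv).2 (ε / 4) (by positivity)] with T hT hsymT hLT s
  have hX := norm_intervalIntegral_le_of_norm_shift_sub_le (by fun_prop) (hL s T hT.le)
    (by simpa using hL (-T) T hT.le)
  rw [norm_smul, Real.norm_of_nonneg (by positivity), one_div, inv_mul_lt_iff₀ (by positivity)]
    at hsymT
  rw [div_lt_iff₀ hT] at hLT
  rw [norm_smul, Real.norm_of_nonneg (by positivity), one_div, inv_mul_le_iff₀ hT]
  linarith

end AlmostPeriodic

/-- Uniform estimate for averages over the hull: there is a bounded decreasing
function `μ` with `μ(T) → 0` such that `‖(1/T)∫_s^{s+T}(ζ(t) − σ̄) dt‖ ≤ μ(T)`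
for all `ζ` in the hull, all `s ∈ ℝ` and all `T > 0`. -/
theorem uniform_mean_estimate {M : Type*} [NormedAddCommGroup M] [NormedSpace ℝ M]
    [CompleteSpace M] (σ : ℝ →ᵇ M) (hσ : AlmostPeriodic σ) (σbar : M)
    (hmean : Tendsto (fun T : ℝ => (1 / (2 * T)) • ∫ t in (-T)..T, σ t) atTop (𝓝 σbar)) :
    ∃ μ : ℝ → ℝ, (∀ T > 0, 0 ≤ μ T) ∧ (∃ C, ∀ T > 0, μ T ≤ C) ∧
      AntitoneOn μ (Set.Ioi 0) ∧ Tendsto μ atTop (𝓝 0) ∧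
      ∀ ζ ∈ hull σ, ∀ s : ℝ, ∀ T > 0,
        ‖(1 / T) • ∫ t in s..(s + T), (ζ t - σbar)‖ ≤ μ T := by
  obtain ⟨μ, hμ0, hμC, hanti, hlim, hle⟩ := exists_antitone_majorant_of_eventually_le
    (fun s T => ‖(1 / T) • ∫ t in s..s + T, (σ t - σbar)‖) (fun _ _ => norm_nonneg _)
    (norm_average_sub_le σ σbar) fun _ => hσ.eventually_norm_average_sub_le hmean
  refine ⟨μ, fun T _ => hμ0 T, ⟨_, fun T _ => hμC T⟩, hanti.antitoneOn _, hlim, ?_⟩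
  intro ζ hζ s T _
  have hclosed : IsClosed {ζ : ℝ →ᵇ M | ‖(1 / T) • ∫ t in s..s + T, (ζ t - σbar)‖ ≤ μ T} :=
    isClosed_le (continuous_norm.comp (continuous_const.smul
      (intervalIntegral.continuous_parametric_intervalIntegral_of_continuous' (by fun_prop) _ _)))
      continuous_const
  refine closure_minimal ?_ hclosed hζ
  rintro _ ⟨h, rfl⟩
  simpa [intervalIntegral_apTranslate_sub, add_right_comm] using hle (s + h) T
end

section
/- Let X be a complete metric space and π a global two-sided continuous flow on X. A point x ∈ X is recurrent (its orbit is precompact, and for every ε > 0 there exists ℓ > 0 such that every interval of length ℓ contains some τ with d(π(τ)x, x) < ε) if and only if x belongs to a compact minimal set of the flow. -/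
open Topology Filter

/-- A point `x` is recurrent for the flow `π` if its orbit is precompact and for
every `ε > 0` there is `ℓ > 0` such that every interval of length `ℓ` contains
some `τ` with `d(π(τ)x, x) < ε`. -/
def FlowRecurrent {X : Type*} [MetricSpace X] (π : Flow ℝ X) (x : X) : Prop :=
  IsCompact (closure (Set.range fun t => π.toFun t x)) ∧
  ∀ ε > 0, ∃ ℓ > 0, ∀ a : ℝ, ∃ τ ∈ Set.Icc a (a + ℓ), dist (π.toFun τ x) x < ε

/-- A set is invariant for the flow if it is mapped into itself at all times. -/
def FlowInvariant {X : Type*} [TopologicalSpace X] (π : Flow ℝ X) (S : Set X) : Prop :=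
  ∀ t : ℝ, ∀ x ∈ S, π.toFun t x ∈ S

/-- A minimal set of the flow: nonempty, closed, invariant and containing no
nonempty proper closed invariant subset. -/
def FlowMinimal {X : Type*} [TopologicalSpace X] (π : Flow ℝ X) (S : Set X) : Prop :=
  S.Nonempty ∧ IsClosed S ∧ FlowInvariant π S ∧
    ∀ S' ⊆ S, S'.Nonempty → IsClosed S' → FlowInvariant π S' → S' = S

/-- The closure of an orbit is invariant. -/
lemma flowInvariant_closure_orbit {X : Type*} [TopologicalSpace X] (π : Flow ℝ X) (y : X) :
    FlowInvariant π (closure (Set.range fun t => π.toFun t y)) := by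
  intro t z hz
  have hm : Set.MapsTo (π.toFun t) (Set.range fun s => π.toFun s y)
      (Set.range fun s => π.toFun s y) := by
    rintro _ ⟨s, rfl⟩
    exact ⟨t + s, by simpa using π.map_add t s y⟩
  exact hm.closure (π.continuous_toFun t) hz

/-- The orbit of a point of an invariant set stays in the set; so does its closure
if the set is closed. -/
lemma orbit_closure_subset {X : Type*} [TopologicalSpace X] (π : Flow ℝ X) {S : Set X}
    (hS : IsClosed S) (hinv : FlowInvariant π S) {y : X} (hy : y ∈ S) :
    closure (Set.range fun t => π.toFun t y) ⊆ S := by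
  refine closure_minimal ?_ hS
  rintro _ ⟨t, rfl⟩
  exact hinv t y hy

/-- Birkhoff: a point of a global flow on a complete metric space is recurrent if
and only if it belongs to a compact minimal set. -/
theorem recurrent_iff_mem_compact_minimal {X : Type*} [MetricSpace X] [CompleteSpace X]
    (π : Flow ℝ X) (x : X) :
    FlowRecurrent π x ↔ ∃ S : Set X, IsCompact S ∧ FlowMinimal π S ∧ x ∈ S := by
  constructor
  · rintro ⟨hK, hrec⟩
    set K := closure (Set.range fun t => π.toFun t x) with hKdef
    have hxK : x ∈ K := subset_closure ⟨0, π.map_zero_apply x⟩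
    have hKclosed : IsClosed K := isClosed_closure
    have hKinv : FlowInvariant π K := flowInvariant_closure_orbit π x
    refine ⟨K, hK, ⟨⟨x, hxK⟩, hKclosed, hKinv, ?_⟩, hxK⟩
    intro S' hS'K ⟨y, hyS'⟩ hS'closed hS'inv
    -- key claim: x is in the closure of the orbit of y
    have hx_cl : x ∈ closure (Set.range fun t => π.toFun t y) := by
      rw [Metric.mem_closure_iff]
      intro ε hε
      obtain ⟨ℓ, hℓ, hrec'⟩ := hrec (ε / 2) (by positivity)
      -- uniform continuity on Icc 0 ℓ ×ˢ K
      have hC : IsCompact ((Set.Icc (0:ℝ) ℓ) ×ˢ K) := (isCompact_Icc).prod hK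
      have hucont : UniformContinuousOn (fun p : ℝ × X => π.toFun p.1 p.2)
          ((Set.Icc (0:ℝ) ℓ) ×ˢ K) :=
        hC.uniformContinuousOn_of_continuous π.cont'.continuousOn
      obtain ⟨δ, hδ, hδ'⟩ := Metric.uniformContinuousOn_iff.1 hucont (ε / 2) (by positivity)
      -- y is in K, approximate it by an orbit point
      have hyK : y ∈ K := hS'K hyS'
      obtain ⟨_, ⟨s, rfl⟩, hsd⟩ := Metric.mem_closure_iff.1 hyK δ hδ
      -- recurrence on the interval [s, s + ℓ]
      obtain ⟨τ', ⟨hτ'1, hτ'2⟩, hτ'd⟩ := hrec' s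
      set σ := τ' - s with hσdef
      have hσ : σ ∈ Set.Icc (0:ℝ) ℓ := ⟨by linarith, by linarith⟩
      refine ⟨π.toFun σ y, ⟨σ, rfl⟩, ?_⟩
      have h1 : dist (π.toFun σ y) (π.toFun σ (π.toFun s x)) < ε / 2 := by
        have := hδ' (σ, y) ⟨hσ, hyK⟩ (σ, π.toFun s x)
          ⟨hσ, subset_closure ⟨s, rfl⟩⟩ ?_
        · exact this
        · rw [Prod.dist_eq, dist_self]
          exact max_lt hδ (by simpa [dist_comm] using hsd)
      have h2 : π.toFun σ (π.toFun s x) = π.toFun τ' x := by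
        rw [← π.map_add]; congr 1; ring
      calc dist x (π.toFun σ y) = dist (π.toFun σ y) x := dist_comm _ _
        _ ≤ dist (π.toFun σ y) (π.toFun σ (π.toFun s x)) +
            dist (π.toFun σ (π.toFun s x)) x := dist_triangle _ _ _
        _ < ε / 2 + ε / 2 := by
            refine add_lt_add h1 ?_
            rw [h2]; exact hτ'd
        _ = ε := by ring
    -- hence x ∈ S', then K ⊆ S'
    have hxS' : x ∈ S' := orbit_closure_subset π hS'closed hS'inv hyS' hx_cl
    have : K ⊆ S' := orbit_closure_subset π hS'closed hS'inv hxS'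
    exact Set.Subset.antisymm hS'K this
  · rintro ⟨S, hScomp, ⟨hSne, hSclosed, hSinv, hSmin⟩, hxS⟩
    -- closure of orbit of x equals S by minimality
    have horb : closure (Set.range fun t => π.toFun t x) ⊆ S :=
      orbit_closure_subset π hSclosed hSinv hxS
    have hKcomp : IsCompact (closure (Set.range fun t => π.toFun t x)) :=
      hScomp.of_isClosed_subset isClosed_closure horb
    refine ⟨hKcomp, ?_⟩
    by_contra h
    push_neg at h
    obtain ⟨ε, hε, hbad⟩ := h
    -- for each n, pick a_n witnessing failure of recurrence with ℓ = n + 1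
    have hchoice : ∀ n : ℕ, ∃ a : ℝ, ∀ τ ∈ Set.Icc a (a + ((n : ℝ) + 1)),
        ε ≤ dist (π.toFun τ x) x :=
      fun n => hbad ((n : ℝ) + 1) (by positivity)
    choose a ha using hchoice
    set y : ℕ → X := fun n => π.toFun (a n + ((n : ℝ) + 1) / 2) x with hy
    have hyS : ∀ n, y n ∈ S := fun n => hSinv _ x hxS
    have hfar : ∀ n : ℕ, ∀ τ : ℝ, |τ| ≤ ((n : ℝ) + 1) / 2 → ε ≤ dist (π.toFun τ (y n)) x := by
      intro n τ hτ
      have heq : π.toFun τ (y n) = π.toFun (τ + (a n + ((n : ℝ) + 1) / 2)) x :=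
        (π.map_add _ _ x).symm
      rw [heq]
      obtain ⟨h1, h2⟩ := abs_le.1 hτ
      exact ha n _ ⟨by linarith, by linarith⟩
    obtain ⟨z, hzS, φ, hφ, hconv⟩ := hScomp.tendsto_subseq hyS
    have hzfar : ∀ τ : ℝ, ε ≤ dist (π.toFun τ z) x := by
      intro τ
      have hc : Tendsto (fun n => π.toFun τ (y (φ n))) atTop (𝓝 (π.toFun τ z)) :=
        ((π.continuous_toFun τ).tendsto z).comp hconv
      refine ge_of_tendsto (hc.dist tendsto_const_nhds) ?_
      filter_upwards [eventually_ge_atTop ⌈2 * |τ|⌉₊] with n hn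
      refine hfar (φ n) τ ?_
      have h1 : (2 * |τ| : ℝ) ≤ (⌈2 * |τ|⌉₊ : ℕ) := Nat.le_ceil _
      have h2 : (⌈2 * |τ|⌉₊ : ℝ) ≤ (n : ℝ) := Nat.cast_le.2 hn
      have h3 : (n : ℝ) ≤ (φ n : ℝ) := Nat.cast_le.2 hφ.le_apply
      linarith
    -- orbit closure of z is a closed invariant subset of S missing x
    set S' := closure (Set.range fun t => π.toFun t z) with hS'
    have hS'sub : S' ⊆ S := orbit_closure_subset π hSclosed hSinv hzS
    have hS'eq : S' = S := hSmin S' hS'sub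
      ⟨z, subset_closure ⟨0, π.map_zero_apply z⟩⟩ isClosed_closure
      (flowInvariant_closure_orbit π z)
    have hxS' : x ∈ S' := hS'eq ▸ hxS
    have hclosed : IsClosed {w : X | ε ≤ dist w x} :=
      isClosed_le continuous_const (continuous_id.dist continuous_const)
    have : ε ≤ dist x x := by
      have hsub : S' ⊆ {w : X | ε ≤ dist w x} := by
        refine closure_minimal ?_ hclosed
        rintro _ ⟨t, rfl⟩
        exact hzfar t
      exact hsub hxS'
    rw [dist_self] at this
    exact absurd this (not_le.2 hε)
end
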